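/- arXiv:1911.03689 — 10 statements merged into one kernel-verified Lean document; each statement's English description precedes it below -/
import Mathlib

section
/- Let F be a field of prime characteristic p. If f ∈ F[x] is a nonzero polynomial with f(0) = 0 and φ(f) = c · f for some scalar c ∈ F, then c = 1. (That is, 1 is the only possible eigenvalue of φ on polynomials vanishing at 0.) -/
/-!
Shifting the variable does not change the leading coefficient, and subtracting the constant
`f(r)` does not touch it either once `f` is non-constant. So comparing the coefficients of
`x ^ deg f` in `φ_r(f) = c • f` gives `lc f = c * lc f`, whence `c = 1`.
-/

open Polynomial

/-- The map `φ_r : f(x) ↦ f(x+r) − f(r)` on polynomials over a commutative ring. -/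
noncomputable def phiMap {R : Type*} [CommRing R] (r : R) (f : R[X]) : R[X] :=
  f.comp (X + C r) - C (f.eval r)

namespace Polynomial

variable {R : Type*} [CommRing R]

theorem coeff_phiMap_natDegree (r : R) {f : R[X]} (hf : 0 < f.natDegree) :
    (phiMap r f).coeff f.natDegree = f.leadingCoeff := by
  rw [phiMap, coeff_sub, ← taylor_apply, coeff_taylor_natDegree, coeff_C, if_neg hf.ne',
    sub_zero]

theorem eq_one_of_phiMap_eq_smul [NoZeroDivisors R] {r c : R} {f : R[X]}
    (hf : 0 < f.natDegree) (hc : phiMap r f = c • f) : c = 1 := by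
  have hlc : f.leadingCoeff ≠ 0 := leadingCoeff_ne_zero.mpr (ne_zero_of_natDegree_gt hf)
  have hcoeff : f.leadingCoeff = c * f.leadingCoeff := by
    simpa only [coeff_phiMap_natDegree r hf, coeff_smul, smul_eq_mul, coeff_natDegree] using
      congrArg (coeff · f.natDegree) hc
  exact (mul_eq_right₀ hlc).mp hcoeff.symm

end Polynomial

theorem phi_eigenvalue_eq_one_general {F : Type*} [Field F]
    (f : F[X]) (hf0 : f ≠ 0) (hf : f.eval 0 = 0) (c : F)
    (hc : phiMap (1 : F) f = c • f) : c = 1 :=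
  eq_one_of_phiMap_eq_smul (natDegree_pos_iff_degree_pos.mpr (degree_pos_of_root hf0 hf)) hc

/-- over a field of prime characteristic `p`, if a nonzero polynomial
`f` with `f(0) = 0` satisfies `φ(f) = c • f`, then `c = 1`: the only possible
eigenvalue of `φ` on polynomials vanishing at `0` is `1`. -/
theorem phi_eigenvalue_eq_one {F : Type*} [Field F] (p : ℕ) (hp : p.Prime)
    [CharP F p] (f : F[X]) (hf0 : f ≠ 0) (hf : f.eval 0 = 0) (c : F)
    (hc : phiMap (1 : F) f = c • f) : c = 1 :=
  phi_eigenvalue_eq_one_general f hf0 hf c hc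
end

section
/- Let F be a field of prime characteristic p and let f ∈ F[x] be a monic polynomial with f(0) = 0 and deg f = i ≥ 2. If φ(f) = f, then p divides i, i.e. the degree of f is a multiple of p. -/
/-!
Comparing the coefficients of `x^(n-1)`, `n = deg f ≥ 2`, on both sides of
`f(x + r) - f(r) = f(x)`: the constant `f(r)` does not reach degree `n - 1`, and the Taylor
expansion gives `f(x + r) = f(x) + n r lc(f) x^(n-1) + (terms of degree < n - 1)`. Hence
`n r lc(f) = 0`, so `n = 0` in a field when `r ≠ 0`, i.e. the characteristic divides `n`.
-/

open Polynomial

theorem coeff_taylor_natDegree_sub_one {R : Type*} [CommRing R] (r : R) (f : R[X]) :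
    (taylor r f).coeff (f.natDegree - 1) =
      f.coeff (f.natDegree - 1) + f.natDegree * f.leadingCoeff * r := by
  rcases Nat.eq_zero_or_pos f.natDegree with h0 | hpos
  · rw [h0, Nat.cast_zero, zero_mul, zero_mul, add_zero, Nat.zero_sub, taylor_coeff_zero,
      eq_C_of_natDegree_eq_zero h0, eval_C, coeff_C_zero]
  rw [taylor_coeff]
  set q := hasseDeriv (f.natDegree - 1) f
  have hq : q = C (q.coeff 1) * X + C (q.coeff 0) :=
    eq_X_add_C_of_natDegree_le_one (by grind [natDegree_hasseDeriv_le])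
  have hq1 : q.coeff 1 = f.natDegree * f.leadingCoeff := by
    rw [hasseDeriv_coeff, Nat.add_sub_cancel' hpos, Nat.choose_symm hpos, Nat.choose_one_right,
      leadingCoeff]
  rw [hq, eval_add, eval_mul, eval_C, eval_X, eval_C, hq1, hasseDeriv_coeff, zero_add,
    Nat.choose_self, Nat.cast_one, one_mul, add_comm]

theorem coeff_phiMap_of_ne_zero {R : Type*} [CommRing R] (r : R) (f : R[X]) {k : ℕ}
    (hk : k ≠ 0) : (phiMap r f).coeff k = (taylor r f).coeff k := by
  rw [phiMap, coeff_sub, coeff_C_of_ne_zero hk, sub_zero, taylor_apply]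

theorem natDegree_cast_eq_zero_of_phiMap_eq_self {K : Type*} [Field K] {r : K} (hr : r ≠ 0)
    {f : K[X]} (hdeg : 2 ≤ f.natDegree) (hfix : phiMap r f = f) : (f.natDegree : K) = 0 := by
  have hf : f ≠ 0 := by rintro rfl; simp at hdeg
  have key := congrArg (coeff · (f.natDegree - 1)) hfix
  simp only [coeff_phiMap_of_ne_zero r f (by omega : f.natDegree - 1 ≠ 0),
    coeff_taylor_natDegree_sub_one, add_eq_left, mul_eq_zero, leadingCoeff_eq_zero] at key
  tauto

theorem phi_fixed_degree_multiple_of_p_general {F : Type*} [Field F] (p : ℕ)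
    [CharP F p] (f : F[X])
    (hdeg : 2 ≤ f.natDegree)
    (hfix : phiMap (1 : F) f = f) : p ∣ f.natDegree :=
  (CharP.cast_eq_zero_iff F p _).mp
    (natDegree_cast_eq_zero_of_phiMap_eq_self one_ne_zero hdeg hfix)

/-- over a field of prime characteristic `p`, if `f` is monic with
`f(0) = 0`, `deg f ≥ 2` and `φ(f) = f`, then `p` divides `deg f`. -/
theorem phi_fixed_degree_multiple_of_p {F : Type*} [Field F] (p : ℕ)
    (hp : p.Prime) [CharP F p] (f : F[X]) (hmonic : f.Monic)
    (hf0 : f.eval 0 = 0) (hdeg : 2 ≤ f.natDegree)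
    (hfix : phiMap (1 : F) f = f) : p ∣ f.natDegree :=
  phi_fixed_degree_multiple_of_p_general p f hdeg hfix
end

section
/- Let p be a prime, n ≥ 1, and F a finite field with q = p^n elements. For every polynomial f ∈ F[x] with deg f ≤ q − 2 and f(0) = 0, one has φ(f) = f if and only if f lies in the F-linear span of the set {x^{p^k} : 0 ≤ k ≤ n−1} ∪ {(x^p − x)^m : 2 ≤ m ≤ p^{n−1} − 1 and m is not a power of p}. -/
open Polynomial

/-!
`φ(f) = f` says exactly that `g = f - f(1) X` is invariant under `x ↦ x + 1`. In characteristic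
`p` the invariant polynomials are the polynomials in `X^p - X`: this polynomial is invariant, an
invariant of degree `< p` is constant because it takes the same value at `0, 1, …, p - 1`, and
uniqueness of division by `X^p - X` makes quotient and remainder of an invariant invariant, so
induction on the degree applies. The bound on `deg f` gives `g = h(X^p - X)` with
`deg h < p^(n-1)`, and the powers `(X^p - X)^(p^j) = X^(p^(j+1)) - X^(p^j)` are why the exponents
that are powers of `p` can be left out.
-/

section ShiftInvariance

variable {R : Type*} [CommRing R]

theorem monic_X_pow_sub_X [Nontrivial R] {n : ℕ} (hn : 1 < n) : ((X : R[X]) ^ n - X).Monic :=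
  monic_X_pow_sub (by rw [degree_X]; exact_mod_cast hn)

theorem natDegree_X_pow_sub_X [Nontrivial R] {n : ℕ} (hn : 1 < n) :
    ((X : R[X]) ^ n - X).natDegree = n := by
  rw [natDegree_sub_eq_left_of_natDegree_lt] <;> simp [hn]

theorem eval_natCast_eq_eval_zero_of_taylor_one_eq {g : R[X]} (hg : taylor 1 g = g) (m : ℕ) :
    g.eval (m : R) = g.eval 0 := by
  induction m with
  | zero => simp
  | succ k ih => rw [Nat.cast_succ, ← taylor_eval, hg, ih]

theorem phiMap_one_eq_self_iff (f : R[X]) :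
    phiMap 1 f = f ↔ taylor 1 (f - C (f.eval 1) * X) = f - C (f.eval 1) * X := by
  rw [phiMap, ← taylor_apply, map_sub, taylor_mul, taylor_C, taylor_X, map_one]
  constructor <;> intro h <;> linear_combination h

variable (R) in
noncomputable def phiLinearMap (r : R) : R[X] →ₗ[R] R[X] where
  toFun := phiMap r
  map_add' f g := by simp only [phiMap, add_comp, eval_add, map_add]; ring
  map_smul' c f := by simp only [phiMap, smul_eq_C_mul, mul_comp, C_comp, eval_mul, eval_C,
    RingHom.id_apply, map_mul, mul_sub]

theorem mem_eigenspace_phiLinearMap_one_iff (r : R) (f : R[X]) :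
    f ∈ Module.End.eigenspace (phiLinearMap R r) 1 ↔ phiMap r f = f := by
  rw [Module.End.mem_eigenspace_iff, one_smul]
  rfl

end ShiftInvariance

section CharP

variable {R : Type*} [CommRing R] {p : ℕ} [Fact p.Prime] [CharP R p]

theorem taylor_one_X_pow_char_pow (k : ℕ) : taylor 1 (X ^ p ^ k : R[X]) = X ^ p ^ k + 1 := by
  rw [taylor_X_pow, map_one, add_pow_char_pow, one_pow]

theorem taylor_one_X_pow_char_sub_X : taylor 1 (X ^ p - X : R[X]) = X ^ p - X := by
  have h := taylor_one_X_pow_char_pow (R := R) (p := p) 1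
  rw [pow_one] at h
  rw [map_sub, h, taylor_X, map_one, add_sub_add_right_eq_sub]

theorem X_pow_char_sub_X_pow_char_pow (j : ℕ) :
    ((X : R[X]) ^ p - X) ^ p ^ j = X ^ p ^ (j + 1) - X ^ p ^ j := by
  rw [sub_pow_char_pow, ← pow_mul, pow_succ', mul_comm]

variable [IsDomain R]

omit [Fact p.Prime] in
theorem eq_C_eval_zero_of_taylor_one_eq {g : R[X]} (hg : taylor 1 g = g)
    (hdeg : g.natDegree < p) : g = C (g.eval 0) := by
  rw [← sub_eq_zero]
  refine eq_zero_of_natDegree_lt_card_of_eval_eq_zero _ (f := fun k : Fin p => ((k : ℕ) : R))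
    (fun a b h => Fin.ext (CharP.natCast_injOn_Iio R p a.isLt b.isLt h)) (fun k => ?_) ?_
  · simp [eval_natCast_eq_eval_zero_of_taylor_one_eq hg]
  · rw [Fintype.card_fin]
    exact (natDegree_sub_le _ _).trans_lt (by simpa using hdeg)

theorem taylor_one_divByMonic_modByMonic_of_taylor_one_eq {g : R[X]} (hg : taylor 1 g = g) :
    taylor 1 (g /ₘ (X ^ p - X)) = g /ₘ (X ^ p - X) ∧
      taylor 1 (g %ₘ (X ^ p - X)) = g %ₘ (X ^ p - X) := by
  have hmonic := monic_X_pow_sub_X (R := R) (Fact.out : p.Prime).one_lt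
  have hsum := congrArg (taylor 1) (modByMonic_add_div g (X ^ p - X))
  rw [map_add, taylor_mul, taylor_one_X_pow_char_sub_X, hg] at hsum
  have hdeg : (taylor 1 (g %ₘ (X ^ p - X))).degree < (X ^ p - X : R[X]).degree := by
    rw [degree_taylor]
    exact degree_modByMonic_lt g hmonic
  obtain ⟨hq, hr⟩ := div_modByMonic_unique _ _ hmonic ⟨hsum, hdeg⟩
  exact ⟨hq.symm, hr.symm⟩

theorem exists_eq_comp_X_pow_char_sub_X_of_taylor_one_eq {g : R[X]} (hg : taylor 1 g = g) :
    ∃ h : R[X], g = h.comp (X ^ p - X) := by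
  induction hN : g.natDegree using Nat.strong_induction_on generalizing g with
  | _ N ih =>
  have hp := (Fact.out : p.Prime).one_lt
  have hmonic := monic_X_pow_sub_X (R := R) hp
  have hdeg := natDegree_X_pow_sub_X (R := R) hp
  by_cases hlt : g.natDegree < p
  · exact ⟨C (g.eval 0), by rw [C_comp]; exact eq_C_eval_zero_of_taylor_one_eq hg hlt⟩
  obtain ⟨hq, hr⟩ := taylor_one_divByMonic_modByMonic_of_taylor_one_eq hg
  obtain ⟨h, hh⟩ := ih _ (by rw [natDegree_divByMonic _ hmonic]; omega) hq rfl
  have hrdeg : (g %ₘ (X ^ p - X)).natDegree < p := by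
    simpa [hdeg] using natDegree_modByMonic_lt g hmonic (fun h1 => by simp [h1] at hdeg; omega)
  refine ⟨X * h + C ((g %ₘ (X ^ p - X)).eval 0), ?_⟩
  rw [add_comp, mul_comp, X_comp, C_comp, ← hh, ← eq_C_eval_zero_of_taylor_one_eq hr hrdeg,
    add_comm, modByMonic_add_div]

end CharP

def phiGenerators {R : Type*} [CommRing R] (p n : ℕ) : Set R[X] :=
  {g : R[X] | ∃ k ≤ n - 1, g = X ^ p ^ k} ∪
    {g : R[X] | ∃ m : ℕ, 2 ≤ m ∧ m ≤ p ^ (n - 1) - 1 ∧ (¬ ∃ j : ℕ, m = p ^ j) ∧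
      g = (X ^ p - X) ^ m}

section Span

open Submodule

variable {R : Type*} [CommRing R] {p n : ℕ} [hp : Fact p.Prime] [CharP R p]

omit hp [CharP R p] in
theorem X_pow_pow_mem_span_phiGenerators {k : ℕ} (hk : k ≤ n - 1) :
    (X ^ p ^ k : R[X]) ∈ span R (phiGenerators p n) :=
  subset_span (Or.inl ⟨k, hk, rfl⟩)

theorem X_pow_sub_X_pow_mem_span_phiGenerators {m : ℕ} (hm0 : m ≠ 0) (hm : m < p ^ (n - 1)) :
    ((X : R[X]) ^ p - X) ^ m ∈ span R (phiGenerators p n) := by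
  by_cases hpow : ∃ j : ℕ, m = p ^ j
  · obtain ⟨j, rfl⟩ := hpow
    have hj : j < n - 1 := (Nat.pow_lt_pow_iff_right hp.out.one_lt).mp hm
    rw [X_pow_char_sub_X_pow_char_pow]
    exact sub_mem (X_pow_pow_mem_span_phiGenerators hj) (X_pow_pow_mem_span_phiGenerators hj.le)
  · have hm1 : m ≠ 1 := fun h => hpow ⟨0, by rw [h, pow_zero]⟩
    exact subset_span (Or.inr ⟨m, by omega, by omega, hpow, rfl⟩)

theorem comp_X_pow_sub_X_mem_span_phiGenerators {h : R[X]} (h0 : h.coeff 0 = 0)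
    (hdeg : h.natDegree < p ^ (n - 1)) : h.comp (X ^ p - X) ∈ span R (phiGenerators p n) := by
  rw [comp_eq_sum_left]
  refine sum_mem fun e he => ?_
  simp only [← smul_eq_C_mul]
  refine smul_mem _ _ (X_pow_sub_X_pow_mem_span_phiGenerators ?_
    ((le_natDegree_of_mem_supp e he).trans_lt hdeg))
  rintro rfl
  exact mem_support_iff.mp he h0

theorem phiGenerators_subset_eigenspace :
    phiGenerators p n ⊆ (Module.End.eigenspace (phiLinearMap R 1) (1 : R) : Set R[X]) := by
  rintro g (⟨k, -, rfl⟩ | ⟨m, hm, -, -, rfl⟩) <;>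
    rw [SetLike.mem_coe, mem_eigenspace_phiLinearMap_one_iff, phiMap, ← taylor_apply]
  · rw [taylor_one_X_pow_char_pow]
    simp
  · rw [taylor_pow, taylor_one_X_pow_char_sub_X]
    simp [zero_pow (by omega : m ≠ 0)]

end Span

theorem phi_eigenspace_span_general {F : Type*} [Field F] [Fintype F] (p n : ℕ)
    (hp : p.Prime) (hcard : Fintype.card F = p ^ n)
    (f : F[X]) (hdeg : f.natDegree ≤ p ^ n - 2) (hf0 : f.eval 0 = 0) :
    phiMap (1 : F) f = f ↔
      f ∈ Submodule.span F
        ({g : F[X] | ∃ k ≤ n - 1, g = X ^ p ^ k} ∪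
         {g : F[X] | ∃ m : ℕ, 2 ≤ m ∧ m ≤ p ^ (n - 1) - 1 ∧
            (¬ ∃ j : ℕ, m = p ^ j) ∧ g = (X ^ p - X) ^ m}) := by
  have : Fact p.Prime := ⟨hp⟩
  have : CharP F p := charP_of_card_eq_prime_pow hcard
  change _ ↔ f ∈ Submodule.span F (phiGenerators p n)
  refine ⟨fun hfix => ?_, fun hmem => (mem_eigenspace_phiLinearMap_one_iff 1 f).mp
    (Submodule.span_le.mpr phiGenerators_subset_eigenspace hmem)⟩
  obtain ⟨h, hh⟩ := exists_eq_comp_X_pow_char_sub_X_of_taylor_one_eq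
    ((phiMap_one_eq_self_iff f).mp hfix)
  have hh0 : h.coeff 0 = 0 := by
    simpa [coeff_zero_eq_eval_zero, eval_comp, hf0, zero_pow hp.ne_zero] using
      (congrArg (eval 0) hh).symm
  have hq : 1 < p ^ n := hcard ▸ Fintype.one_lt_card
  have hhdeg : h.natDegree * p < p ^ (n - 1) * p := calc
    h.natDegree * p = (f - C (f.eval 1) * X).natDegree := by
      rw [hh, natDegree_comp, natDegree_X_pow_sub_X hp.one_lt]
    _ < p ^ n := (natDegree_sub_le _ _).trans_lt <|
      max_lt (by omega) ((natDegree_C_mul_le _ _).trans_lt (by rwa [natDegree_X]))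
    _ ≤ p ^ (n - 1) * p := by rw [← pow_succ]; exact Nat.pow_le_pow_right hp.pos (by omega)
  have hX : (X : F[X]) ∈ Submodule.span F (phiGenerators p n) := by
    simpa using X_pow_pow_mem_span_phiGenerators (R := F) (p := p) (n := n) (Nat.zero_le _)
  rw [← sub_add_cancel f (C (f.eval 1) * X), hh, ← smul_eq_C_mul]
  exact add_mem (comp_X_pow_sub_X_mem_span_phiGenerators hh0 (Nat.lt_of_mul_lt_mul_right hhdeg))
    (Submodule.smul_mem _ _ hX)

/-- over `F = 𝔽_{p^n}`, a polynomial `f` with `deg f ≤ q − 2` and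
`f(0) = 0` satisfies `φ(f) = f` iff it lies in the span of the monomials
`x^(p^k)` (`0 ≤ k ≤ n−1`) and the polynomials `(x^p − x)^m`
(`2 ≤ m ≤ p^(n−1) − 1`, `m` not a power of `p`). -/
theorem phi_eigenspace_span {F : Type*} [Field F] [Fintype F] (p n : ℕ)
    (hp : p.Prime) (hn : 1 ≤ n) (hcard : Fintype.card F = p ^ n)
    (f : F[X]) (hdeg : f.natDegree ≤ p ^ n - 2) (hf0 : f.eval 0 = 0) :
    phiMap (1 : F) f = f ↔
      f ∈ Submodule.span F
        ({g : F[X] | ∃ k ≤ n - 1, g = X ^ p ^ k} ∪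
         {g : F[X] | ∃ m : ℕ, 2 ≤ m ∧ m ≤ p ^ (n - 1) - 1 ∧
            (¬ ∃ j : ℕ, m = p ^ j) ∧ g = (X ^ p - X) ^ m}) :=
  phi_eigenspace_span_general p n hp hcard f hdeg hf0
end

section
/- Let F be a field of prime characteristic p and let f ∈ F[x] satisfy f(0) = 0. If (φ − id)^k(f) = 0 for a natural number k, then (φ − id)^{k+1}(x · f) = 0. (Multiplication by x sends the k-th generalized eigenspace of φ for eigenvalue 1 into the (k+1)-st.) -/
/-! Write `ψ = φ_r − id`. It is linear, kills every multiple `c·x`, sends `f(0)` to `−f(0)`,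
and satisfies `ψ(x·f) = x·ψ(f) + r·ψ(f) + r·f + f(r)·x`. Applying `ψ^k` to this identity, the
terms `r·ψ^(k+1)(f)` and `r·ψ^k(f)` vanish, `ψ^k(f(r)·x)` vanishes once `k ≥ 1`, and
`ψ^k(x·ψ(f))` vanishes by induction on `k`, applied to `ψ(f)`, which again has constant term
zero. -/

open Polynomial

namespace phiMap

variable {R : Type*} [CommRing R] (r : R)

noncomputable def subId : Module.End R R[X] where
  toFun g := phiMap r g - g
  map_add' a b := by
    simp only [phiMap, add_comp, eval_add, C_add]
    ring
  map_smul' c a := by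
    simp only [phiMap, smul_eq_C_mul, mul_comp, C_comp, eval_mul, eval_C, C_mul, RingHom.id_apply]
    ring

theorem coe_subId : ⇑(subId r) = fun g : R[X] => phiMap r g - g := rfl

theorem subId_C_mul_X (c : R) : subId r (C c * X) = 0 := by
  simp only [coe_subId, phiMap, mul_comp, C_comp, X_comp, eval_mul, eval_C, eval_X, C_mul]
  ring

theorem eval_zero_subId (f : R[X]) : (subId r f).eval 0 = -f.eval 0 := by
  simp [coe_subId, phiMap, eval_comp]

theorem subId_X_mul (f : R[X]) :
    subId r (X * f) = X * subId r f + C r * subId r f + C r * f + C (f.eval r) * X := by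
  simp only [coe_subId, phiMap, mul_comp, X_comp, eval_mul, eval_X, C_mul]
  ring

theorem subId_pow_succ_X_mul (k : ℕ) {f : R[X]} (hf0 : f.eval 0 = 0)
    (hker : (subId r ^ k) f = 0) : (subId r ^ (k + 1)) (X * f) = 0 := by
  induction k generalizing f with
  | zero =>
    rw [pow_zero, Module.End.one_apply] at hker
    rw [hker, mul_zero, map_zero]
  | succ k ih =>
    have hψf : (subId r ^ (k + 1)) (X * subId r f) = 0 :=
      ih (by rw [eval_zero_subId, hf0, neg_zero]) (by rwa [← Module.End.mul_apply, ← pow_succ])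
    have hψ : (subId r ^ (k + 1)) (subId r f) = 0 := by
      rw [← Module.End.mul_apply, ← pow_succ, pow_succ', Module.End.mul_apply, hker, map_zero]
    have hlin : (subId r ^ (k + 1)) (C (f.eval r) * X) = 0 := by
      rw [pow_succ, Module.End.mul_apply, subId_C_mul_X, map_zero]
    rw [pow_succ, Module.End.mul_apply, subId_X_mul, map_add, map_add, map_add, C_mul', C_mul',
      map_smul, map_smul, hψf, hψ, hker, hlin]
    simp only [smul_zero, add_zero]

end phiMap

theorem mul_X_generalized_eigenspace_general {F : Type*} [Field F] (f : F[X]) (hf0 : f.eval 0 = 0) (k : ℕ)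
    (hker : (fun g : F[X] => phiMap (1 : F) g - g)^[k] f = 0) :
    (fun g : F[X] => phiMap (1 : F) g - g)^[k + 1] (X * f) = 0 := by
  rw [← phiMap.coe_subId, ← Module.End.pow_apply] at hker ⊢
  exact phiMap.subId_pow_succ_X_mul 1 k hf0 hker

/-- over a field of prime characteristic `p`, if `f(0) = 0` and
`(φ − id)^k(f) = 0`, then `(φ − id)^(k+1)(x·f) = 0`: multiplication by `x`
sends the `k`-th generalized eigenspace of `φ` (eigenvalue 1) into the
`(k+1)`-st. -/
theorem mul_X_generalized_eigenspace {F : Type*} [Field F] (p : ℕ)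
    (hp : p.Prime) [CharP F p] (f : F[X]) (hf0 : f.eval 0 = 0) (k : ℕ)
    (hker : (fun g : F[X] => phiMap (1 : F) g - g)^[k] f = 0) :
    (fun g : F[X] => phiMap (1 : F) g - g)^[k + 1] (X * f) = 0 :=
  mul_X_generalized_eigenspace_general f hf0 k hker
end

section
/- Let p be a prime, n ≥ 2, F a finite field with q = p^n elements, and 1 ≤ m ≤ p − 1. For every polynomial f ∈ F[x] with deg f ≤ q − 2 and f(0) = 0, one has (φ − id)^m(f) = 0 if and only if f lies in the F-linear span of the set {x^j (x^p − x)^i : 0 ≤ j ≤ m−1, 1 ≤ i ≤ p^{n−1} − 1} ∪ {x^k : 1 ≤ k ≤ m}. -/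
open Polynomial

/-!
On polynomials vanishing at `0`, `φ − id` is the forward difference `Δf = f(X + 1) − f`
followed by the projection killing the constant term, so `(φ − id)^m f = 0` iff `Δ^m f` is
constant. In characteristic `p` the polynomial `X^p − X` is `Δ`-invariant, hence
`Δ^m (X^j (X^p − X)^i) = Δ^m (X^j) (X^p − X)^i = 0` for `j < m`, and every generator lies in
the kernel. Conversely `Δ` lowers a degree `d` with `p ∤ d` by exactly one, so if `Δ^m f` is
constant then `d = deg f` satisfies `d ≤ m` or `d mod p < m`. Either `X^d` or
`X^(d mod p) (X^p − X)^(d / p)` is then a monic generator of degree `d`, and subtracting a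
multiple of it lowers the degree of `f` while staying in the kernel.
-/

namespace Polynomial

theorem mem_of_forall_exists_monic {R : Type*} [Ring R] {K T : Submodule R R[X]} {N : ℕ}
    (h : ∀ f ∈ K, f ≠ 0 → f.natDegree ≤ N →
      ∃ g ∈ K ⊓ T, g.Monic ∧ g.natDegree = f.natDegree)
    {f : R[X]} (hfK : f ∈ K) (hfN : f.natDegree ≤ N) : f ∈ T := by
  induction hd : f.natDegree using Nat.strong_induction_on generalizing f with
  | _ d ih =>
    rcases eq_or_ne f 0 with rfl | hf0
    · exact T.zero_mem
    have : Nontrivial R := Nontrivial.of_polynomial_ne hf0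
    obtain ⟨g, ⟨hgK, hgT⟩, hg, hgd⟩ := h f hfK hf0 hfN
    have hlc : f.leadingCoeff ≠ 0 := leadingCoeff_ne_zero.2 hf0
    have hmul : ∀ S : Submodule R R[X], g ∈ S → C f.leadingCoeff * g ∈ S := fun S hgS ↦ by
      rw [← smul_eq_C_mul]
      exact S.smul_mem _ hgS
    have hrest : f - C f.leadingCoeff * g ∈ T := by
      rcases eq_or_ne (f - C f.leadingCoeff * g) 0 with h0 | h0
      · exact h0 ▸ T.zero_mem
      have hlt : (f - C f.leadingCoeff * g).degree < f.degree := by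
        refine degree_sub_lt_left ?_ hf0 (by rw [leadingCoeff_mul_monic hg, leadingCoeff_C])
        rw [hg.degree_mul, degree_C hlc, zero_add, degree_eq_natDegree hf0,
          degree_eq_natDegree hg.ne_zero, hgd]
      have hlt' := natDegree_lt_natDegree h0 hlt
      exact ih _ (hd ▸ hlt') (K.sub_mem hfK (hmul K hgK))
        (hlt'.le.trans hfN) rfl
    simpa using T.add_mem hrest (hmul T hgT)

variable {R : Type*} [CommRing R]

section FiniteDiff

noncomputable def finiteDiff : R[X] →ₗ[R] R[X] := taylor 1 - LinearMap.id

theorem finiteDiff_apply (f : R[X]) : finiteDiff f = taylor 1 f - f := rfl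

@[simp]
theorem finiteDiff_C (c : R) : finiteDiff (C c) = 0 := by
  simp [finiteDiff_apply]

theorem natDegree_finiteDiff_le (f : R[X]) : (finiteDiff f).natDegree ≤ f.natDegree - 1 := by
  rcases eq_or_ne f.natDegree 0 with hf | hf
  · obtain ⟨c, rfl⟩ := natDegree_eq_zero.1 hf
    simp
  rcases eq_or_ne (finiteDiff f) 0 with h | h
  · simp [h]
  have hf0 : f ≠ 0 := by rintro rfl; simp at hf
  have hlt : (finiteDiff f).degree < f.degree := by
    rw [finiteDiff_apply]
    exact (degree_sub_lt_left (degree_taylor f 1) ((taylor_eq_zero 1 f).not.2 hf0)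
      (leadingCoeff_taylor 1 f)).trans_eq (degree_taylor f 1)
  have := natDegree_lt_natDegree h hlt
  omega

theorem coeff_finiteDiff_of_natDegree_le {f : R[X]} {k : ℕ} (h : f.natDegree ≤ k) :
    (finiteDiff f).coeff k = 0 := by
  rcases eq_or_ne f.natDegree 0 with hf | hf
  · obtain ⟨c, rfl⟩ := natDegree_eq_zero.1 hf
    simp
  · exact coeff_eq_zero_of_natDegree_lt <| (natDegree_finiteDiff_le f).trans_lt (by omega)

theorem coeff_finiteDiff_natDegree_sub_one (f : R[X]) :
    (finiteDiff f).coeff (f.natDegree - 1) = f.natDegree * f.leadingCoeff := by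
  rcases eq_or_ne f.natDegree 0 with hf | hf
  · obtain ⟨c, rfl⟩ := natDegree_eq_zero.1 hf
    simp
  set d := f.natDegree
  have herase : f.eraseLead.natDegree ≤ d - 1 := by
    have := eraseLead_natDegree_le f
    omega
  have hbinom : ((X + 1 : R[X]) ^ d).coeff (d - 1) = d := by
    rw [coeff_X_add_one_pow, Nat.choose_symm (by omega), Nat.choose_one_right]
  conv_lhs => rw [← eraseLead_add_C_mul_X_pow f, map_add, ← smul_eq_C_mul, map_smul]
  rw [coeff_add, coeff_finiteDiff_of_natDegree_le herase, coeff_smul, finiteDiff_apply,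
    taylor_X_pow, C_1, coeff_sub, hbinom, coeff_X_pow, if_neg (by omega)]
  simp [mul_comm]

variable [IsDomain R]

theorem natDegree_finiteDiff {f : R[X]} (h : (f.natDegree : R) ≠ 0) :
    (finiteDiff f).natDegree = f.natDegree - 1 := by
  have hf0 : f ≠ 0 := by rintro rfl; simp at h
  refine le_antisymm (natDegree_finiteDiff_le f) (le_natDegree_of_ne_zero ?_)
  rw [coeff_finiteDiff_natDegree_sub_one]
  exact mul_ne_zero h (leadingCoeff_ne_zero.2 hf0)

theorem natDegree_finiteDiff_pow {f : R[X]} {t : ℕ}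
    (h : ∀ s < t, ((f.natDegree - s : ℕ) : R) ≠ 0) :
    ((finiteDiff ^ t) f).natDegree = f.natDegree - t := by
  induction t with
  | zero => rfl
  | succ t ih =>
    have hdeg := ih fun s hs ↦ h s (by omega)
    rw [pow_succ', Module.End.mul_apply, natDegree_finiteDiff (hdeg ▸ h t (by omega)), hdeg]
    omega

end FiniteDiff

theorem natDegree_finiteDiff_pow_le (f : R[X]) (t : ℕ) :
    ((finiteDiff ^ t) f).natDegree ≤ f.natDegree - t := by
  induction t with
  | zero => rfl
  | succ t ih =>
    rw [pow_succ', Module.End.mul_apply]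
    exact (natDegree_finiteDiff_le _).trans (by omega)

theorem finiteDiff_pow_eq_zero_of_natDegree_lt {f : R[X]} {t : ℕ}
    (h : f.natDegree < t) : (finiteDiff ^ t) f = 0 := by
  obtain ⟨s, rfl⟩ := Nat.exists_eq_add_of_lt h
  have hconst := natDegree_finiteDiff_pow_le f (f.natDegree + s)
  rw [Nat.sub_eq_zero_of_le (by omega), Nat.le_zero] at hconst
  rw [pow_succ', Module.End.mul_apply, eq_C_of_natDegree_eq_zero hconst, finiteDiff_C]

theorem finiteDiff_pow_mul_of_taylor_eq {g : R[X]}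
    (hg : taylor 1 g = g) (f : R[X]) (t : ℕ) :
    (finiteDiff ^ t) (f * g) = (finiteDiff ^ t) f * g := by
  induction t with
  | zero => rfl
  | succ t ih =>
    rw [pow_succ', Module.End.mul_apply, ih, Module.End.mul_apply, finiteDiff_apply,
      finiteDiff_apply, taylor_mul, hg, sub_mul]

theorem taylor_one_X_pow_sub_X (p : ℕ) [ExpChar R p] :
    taylor 1 (X ^ p - X : R[X]) = X ^ p - X := by
  rw [map_sub, taylor_X_pow, taylor_X, C_1, add_pow_expChar, one_pow]
  ring

section PhiSubId

noncomputable def phiSubId : R[X] →ₗ[R] R[X] where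
  toFun g := phiMap 1 g - g
  map_add' f g := by simp only [phiMap, add_comp, eval_add, C_add]; ring
  map_smul' c g := by
    simp only [phiMap, smul_eq_C_mul, mul_comp, C_comp, eval_mul, eval_C, C_mul,
      RingHom.id_apply]
    ring

theorem coe_phiSubId_pow (t : ℕ) : ⇑(phiSubId ^ t : Module.End R R[X]) =
    (fun g : R[X] ↦ phiMap 1 g - g)^[t] :=
  Module.End.coe_pow _ t

theorem phiSubId_apply (g : R[X]) :
    phiSubId g = finiteDiff g - C (g.eval 1) := by
  simp only [phiSubId, phiMap, LinearMap.coe_mk, AddHom.coe_mk, finiteDiff_apply, taylor_apply,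
    C_1]
  ring

theorem eval_zero_phiSubId_pow (g : R[X]) (t : ℕ) :
    ((phiSubId ^ t) g).eval 0 = (-1) ^ t * g.eval 0 := by
  induction t with
  | zero => simp
  | succ t ih =>
    rw [pow_succ', Module.End.mul_apply, phiSubId_apply, finiteDiff_apply, eval_sub, eval_sub,
      taylor_eval, zero_add, eval_C, ih, pow_succ]
    ring

theorem eval_zero_eq_zero_of_phiSubId_pow_eq_zero {g : R[X]} {t : ℕ}
    (hg : (phiSubId ^ t) g = 0) : g.eval 0 = 0 := by
  have h := eval_zero_phiSubId_pow g t
  rw [hg, eval_zero] at h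
  exact ((isUnit_neg_one.pow t).mul_right_eq_zero).1 h.symm

theorem phiSubId_pow_apply {g : R[X]} (hg : g.eval 0 = 0) (t : ℕ) :
    (phiSubId ^ t) g = (finiteDiff ^ t) g - C (((finiteDiff ^ t) g).eval 0) := by
  induction t with
  | zero => simp [hg]
  | succ t ih =>
    rw [pow_succ', Module.End.mul_apply, ih, pow_succ', Module.End.mul_apply]
    generalize (finiteDiff ^ t) g = h
    simp only [map_sub, phiSubId_apply, finiteDiff_apply, taylor_C, eval_sub, taylor_eval,
      zero_add, eval_C]
    ring

theorem phiSubId_pow_apply_eq_zero_iff {g : R[X]} (hg : g.eval 0 = 0) (t : ℕ) :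
    (phiSubId ^ t) g = 0 ↔ ((finiteDiff ^ t) g).natDegree = 0 := by
  rw [phiSubId_pow_apply hg, sub_eq_zero, ← coeff_zero_eq_eval_zero]
  exact ⟨fun h ↦ h ▸ natDegree_C _, eq_C_of_natDegree_eq_zero⟩

end PhiSubId

section PhiKernel

variable {p n m : ℕ}

variable (R p n m) in
def phiKernelGens : Set R[X] :=
  {g : R[X] | ∃ j ≤ m - 1, ∃ i : ℕ, 1 ≤ i ∧ i ≤ p ^ (n - 1) - 1 ∧
      g = X ^ j * (X ^ p - X) ^ i} ∪
    {g : R[X] | ∃ k : ℕ, 1 ≤ k ∧ k ≤ m ∧ g = X ^ k}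

theorem phiKernelGens_subset_ker [ExpChar R p] (hm : 1 ≤ m) :
    phiKernelGens R p n m ⊆ LinearMap.ker (phiSubId ^ m : Module.End R R[X]) := by
  rintro g (⟨j, hj, i, hi, -, rfl⟩ | ⟨k, hk, hkm, rfl⟩) <;> rw [SetLike.mem_coe, LinearMap.mem_ker]
  · have hp := expChar_ne_zero R p
    rw [phiSubId_pow_apply_eq_zero_iff (by simp [hp, zero_pow (by omega : i ≠ 0)]),
      finiteDiff_pow_mul_of_taylor_eq (by rw [taylor_pow, taylor_one_X_pow_sub_X]),
      finiteDiff_pow_eq_zero_of_natDegree_lt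
        (by have := natDegree_X_pow_le (R := R) j; omega), zero_mul,
      natDegree_zero]
  · rw [phiSubId_pow_apply_eq_zero_iff (by simp [zero_pow (by omega : k ≠ 0)])]
    exact Nat.le_zero.1 <| (natDegree_finiteDiff_pow_le _ _).trans
      (by have := natDegree_X_pow_le (R := R) k; omega)

theorem natDegree_le_or_mod_lt_of_phiSubId_pow_eq_zero [IsDomain R] [CharP R p] {f : R[X]}
    (hf0 : f.eval 0 = 0) (hf : (phiSubId ^ m) f = 0) :
    f.natDegree ≤ m ∨ f.natDegree % p < m := by
  by_contra! hlarge
  have hdeg := natDegree_finiteDiff_pow (t := m) (f := f) fun s hs hcast ↦ by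
    have hmod : s % p = f.natDegree % p :=
      (Nat.modEq_iff_dvd' (by omega)).2 ((CharP.cast_eq_zero_iff R p _).1 hcast)
    have := Nat.mod_le s p
    omega
  rw [(phiSubId_pow_apply_eq_zero_iff hf0 m).1 hf] at hdeg
  omega

theorem exists_monic_mem_phiKernelGens [Nontrivial R] (hp : 1 < p) (hm : 1 ≤ m) {D : ℕ}
    (hD : D ≠ 0) (hDq : D < p ^ n) (hDm : D ≤ m ∨ D % p < m) :
    ∃ g ∈ phiKernelGens R p n m, g.Monic ∧ g.natDegree = D := by
  rcases le_or_gt D m with hDm' | hmD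
  · exact ⟨X ^ D, Or.inr ⟨D, by omega, hDm', rfl⟩, monic_X_pow D, natDegree_X_pow D⟩
  have hmod : D % p < m := hDm.resolve_left hmD.not_ge
  have hpD : p ≤ D := by
    by_contra h
    rw [Nat.mod_eq_of_lt (by omega)] at hmod
    omega
  have hi : D / p < p ^ (n - 1) := by
    refine Nat.div_lt_of_lt_mul (hDq.trans_le ?_)
    calc p ^ n ≤ p ^ (n - 1 + 1) := Nat.pow_le_pow_right (by omega) (by omega)
      _ = p * p ^ (n - 1) := pow_succ' _ _
  have hXp : (X ^ p - X : R[X]).Monic := monic_X_pow_sub (by rw [degree_X]; exact_mod_cast hp)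
  have hXpdeg : (X ^ p - X : R[X]).natDegree = p := by
    rw [natDegree_sub_eq_left_of_natDegree_lt] <;> simp [hp]
  refine ⟨X ^ (D % p) * (X ^ p - X) ^ (D / p),
    Or.inl ⟨D % p, by omega, D / p, Nat.div_pos hpD (by omega), by omega, rfl⟩,
    (monic_X_pow _).mul (hXp.pow _), ?_⟩
  rw [(monic_X_pow _).natDegree_mul (hXp.pow _), natDegree_X_pow, hXp.natDegree_pow, hXpdeg,
    mul_comm, Nat.mod_add_div]

end PhiKernel

end Polynomial

theorem phi_generalized_eigenspace_span_general {F : Type*} [Field F] [Fintype F]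
    (p n : ℕ) (hp : p.Prime) (hcard : Fintype.card F = p ^ n)
    (m : ℕ) (hm1 : 1 ≤ m)
    (f : F[X]) (hdeg : f.natDegree ≤ p ^ n - 2) :
    (fun g : F[X] => phiMap (1 : F) g - g)^[m] f = 0 ↔
      f ∈ Submodule.span F
        ({g : F[X] | ∃ j ≤ m - 1, ∃ i : ℕ, 1 ≤ i ∧ i ≤ p ^ (n - 1) - 1 ∧
            g = X ^ j * (X ^ p - X) ^ i} ∪
         {g : F[X] | ∃ k : ℕ, 1 ≤ k ∧ k ≤ m ∧ g = X ^ k}) := by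
  have : Fact p.Prime := ⟨hp⟩
  have : CharP F p := charP_of_card_eq_prime_pow hcard
  rw [← coe_phiSubId_pow, ← LinearMap.mem_ker]
  change _ ↔ f ∈ Submodule.span F (phiKernelGens F p n m)
  refine ⟨fun hf ↦ mem_of_forall_exists_monic (fun g hg hg_ne hgN ↦ ?_) hf hdeg,
    fun hf ↦ Submodule.span_le.2 (phiKernelGens_subset_ker hm1) hf⟩
  have hg_eval := eval_zero_eq_zero_of_phiSubId_pow_eq_zero hg
  have hD := (natDegree_pos_of_eval₂_root hg_ne (RingHom.id F) hg_eval fun _ ↦ id).ne'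
  have hq : 0 < p ^ n := pow_pos hp.pos n
  obtain ⟨g', hg', hmon, hdeg'⟩ : ∃ g' ∈ phiKernelGens F p n m, g'.Monic ∧
      g'.natDegree = g.natDegree :=
    exists_monic_mem_phiKernelGens hp.one_lt hm1 hD (by omega)
      (natDegree_le_or_mod_lt_of_phiSubId_pow_eq_zero hg_eval hg)
  exact ⟨g', ⟨phiKernelGens_subset_ker hm1 hg', Submodule.subset_span hg'⟩, hmon, hdeg'⟩

/-- over `F = 𝔽_{p^n}` with `n ≥ 2` and `1 ≤ m ≤ p − 1`, a polynomial
`f` with `deg f ≤ q − 2` and `f(0) = 0` satisfies `(φ − id)^m(f) = 0` iff it lies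
in the span of `{x^j (x^p − x)^i : 0 ≤ j ≤ m−1, 1 ≤ i ≤ p^(n−1) − 1}` together
with `{x^k : 1 ≤ k ≤ m}`. -/
theorem phi_generalized_eigenspace_span {F : Type*} [Field F] [Fintype F]
    (p n : ℕ) (hp : p.Prime) (hn : 2 ≤ n) (hcard : Fintype.card F = p ^ n)
    (m : ℕ) (hm1 : 1 ≤ m) (hm2 : m ≤ p - 1)
    (f : F[X]) (hdeg : f.natDegree ≤ p ^ n - 2) (hf0 : f.eval 0 = 0) :
    (fun g : F[X] => phiMap (1 : F) g - g)^[m] f = 0 ↔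
      f ∈ Submodule.span F
        ({g : F[X] | ∃ j ≤ m - 1, ∃ i : ℕ, 1 ≤ i ∧ i ≤ p ^ (n - 1) - 1 ∧
            g = X ^ j * (X ^ p - X) ^ i} ∪
         {g : F[X] | ∃ k : ℕ, 1 ≤ k ∧ k ≤ m ∧ g = X ^ k}) :=
  phi_generalized_eigenspace_span_general p n hp hcard m hm1 f hdeg
end

section
/- Let F be a field of prime characteristic p, let r ∈ F, let i be a natural number not divisible by p, and let k be a natural number. Then for every polynomial f ∈ F[x] with f(0) = 0, one has (φ_r − id)^k(f) = 0 if and only if (φ_{(i:F)·r} − id)^k(f) = 0, where (i : F) denotes the natural number i cast into F. (The generalized eigenspaces of φ_r and φ_{i·r} coincide for every i ∈ 𝔽_p^*.) -/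
/-! Since `φ_r ∘ φ_s = φ_{r+s}`, we have `φ_{nr} = φ_r ^ n` for `n ≥ 1`. As `x - 1` divides
`x ^ n - 1`, the operator `(φ_{nr} - 1) ^ k` is a polynomial in `φ_r` times `(φ_r - 1) ^ k`, so
`ker (φ_r - 1) ^ k ⊆ ker (φ_{nr} - 1) ^ k`. Because `i` is invertible modulo `p`, `r = j · (i r)`
for some natural number `j`, which gives the reverse inclusion. -/

open Polynomial

theorem Module.End.ker_pow_sub_one_le_ker_pow_pow_sub_one {R M : Type*} [CommRing R]
    [AddCommGroup M] [Module R M] (f : Module.End R M) (n k : ℕ) :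
    LinearMap.ker ((f - 1) ^ k) ≤ LinearMap.ker ((f ^ n - 1) ^ k) := by
  obtain ⟨q, hq⟩ := pow_dvd_pow_of_dvd (sub_one_dvd_pow_sub_one (X : R[X]) n) k
  have hfq : (f ^ n - 1) ^ k = aeval f q * (f - 1) ^ k := by
    simpa [mul_comm] using congrArg (aeval f) hq
  rw [hfq, Module.End.mul_eq_comp]
  exact LinearMap.ker_le_ker_comp _ _

theorem CharP.exists_natCast_mul_eq_one {F : Type*} [Field F] {p i : ℕ} (hp : p.Prime)
    [CharP F p] (hi : ¬ p ∣ i) : ∃ j : ℕ, (j : F) * i = 1 := by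
  obtain ⟨j, -, hj⟩ := Nat.exists_mul_mod_eq_one_of_coprime
    ((Nat.Prime.coprime_iff_not_dvd hp).mpr hi).symm hp.one_lt
  refine ⟨j, ?_⟩
  rw [← Nat.cast_mul, mul_comm, CharP.cast_eq_mod F p, hj, Nat.cast_one]

namespace Polynomial

variable {R : Type*} [CommRing R]

theorem phiMap_phiMap (r s : R) (f : R[X]) : phiMap r (phiMap s f) = phiMap (r + s) f := by
  simp only [phiMap, sub_comp, comp_assoc, add_comp, X_comp, C_comp, eval_sub,
    eval_comp, eval_add, eval_X, eval_C, C_add, C_sub]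
  ring_nf

noncomputable def phiLinearMap (r : R) : Module.End R R[X] :=
  taylor r - (Algebra.linearMap R R[X]).comp (leval r)

@[simp]
theorem phiLinearMap_apply (r : R) (f : R[X]) : phiLinearMap r f = phiMap r f := by
  simp [phiLinearMap, phiMap, taylor_apply]

theorem phiLinearMap_mul (r s : R) : phiLinearMap r * phiLinearMap s = phiLinearMap (r + s) :=
  LinearMap.ext fun f => by simp [phiMap_phiMap]

theorem phiLinearMap_pow (r : R) {n : ℕ} (hn : n ≠ 0) :
    phiLinearMap r ^ n = phiLinearMap (n * r) := by
  obtain ⟨n, rfl⟩ := Nat.exists_eq_add_one_of_ne_zero hn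
  induction n with
  | zero => simp
  | succ n ih =>
    rw [pow_succ', ih n.succ_ne_zero, phiLinearMap_mul]
    push_cast
    ring_nf

theorem iterate_phiMap_sub_self (r : R) (k : ℕ) (f : R[X]) :
    (fun g : R[X] => phiMap r g - g)^[k] f = ((phiLinearMap r - 1) ^ k) f := by
  have hsub : ⇑(phiLinearMap r - 1) = fun g => phiMap r g - g := by
    ext1 g
    simp
  rw [Module.End.pow_apply, hsub]

theorem ker_phiLinearMap_sub_one_pow_le (r : R) {n : ℕ} (hn : n ≠ 0) (k : ℕ) :
    LinearMap.ker ((phiLinearMap r - 1) ^ k) ≤ LinearMap.ker ((phiLinearMap (n * r) - 1) ^ k) :=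
  phiLinearMap_pow r hn ▸ (phiLinearMap r).ker_pow_sub_one_le_ker_pow_pow_sub_one n k

end Polynomial

theorem phi_r_same_generalized_eigenspace_general {F : Type*} [Field F] (p : ℕ)
    (hp : p.Prime) [CharP F p] (r : F) (i : ℕ) (hi : ¬ p ∣ i) (k : ℕ)
    (f : F[X]) :
    (fun g : F[X] => phiMap r g - g)^[k] f = 0 ↔
      (fun g : F[X] => phiMap ((i : F) * r) g - g)^[k] f = 0 := by
  obtain ⟨j, hji⟩ := CharP.exists_natCast_mul_eq_one (F := F) hp hi
  have hi0 : i ≠ 0 := by rintro rfl; exact hi (dvd_zero p)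
  have hj0 : j ≠ 0 := by rintro rfl; simp at hji
  have hr : (j : F) * (i * r) = r := by rw [← mul_assoc, hji, one_mul]
  have hker : LinearMap.ker ((phiLinearMap r - 1) ^ k) =
      LinearMap.ker ((phiLinearMap ((i : F) * r) - 1) ^ k) :=
    le_antisymm (ker_phiLinearMap_sub_one_pow_le r hi0 k)
      (by simpa only [hr] using ker_phiLinearMap_sub_one_pow_le ((i : F) * r) hj0 k)
  simp only [iterate_phiMap_sub_self, ← LinearMap.mem_ker, hker]

/-- over a field of prime characteristic `p`, for `i` not divisible
by `p`, a polynomial `f` with `f(0) = 0` satisfies `(φ_r − id)^k(f) = 0` iff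
`(φ_{i·r} − id)^k(f) = 0`: the generalized eigenspaces of `φ_r` and `φ_{i·r}`
coincide. -/
theorem phi_r_same_generalized_eigenspace {F : Type*} [Field F] (p : ℕ)
    (hp : p.Prime) [CharP F p] (r : F) (i : ℕ) (hi : ¬ p ∣ i) (k : ℕ)
    (f : F[X]) (hf0 : f.eval 0 = 0) :
    (fun g : F[X] => phiMap r g - g)^[k] f = 0 ↔
      (fun g : F[X] => phiMap ((i : F) * r) g - g)^[k] f = 0 :=
  phi_r_same_generalized_eigenspace_general p hp r i hi k f
end

section
/- Let p be a prime, n ≥ 1, and F a finite field with p^n elements. The number of monic polynomials f ∈ F[x] which lie in the F-linear span of the monomials {x^{p^j} : 0 ≤ j ≤ n−1} (i.e. monic linearized polynomials) and whose evaluation map x ↦ f(x) is a bijection of F, is exactly (p^n − p)(p^n − p²)···(p^n − p^{n−1}) = ∏_{i=1}^{n−1} (p^n − p^i). -/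
/-!
Over `F = 𝔽_{p^n}`, evaluation identifies the `F`-span of `X, X^p, …, X^(p^(n-1))` with the
`𝔽_p`-linear endomorphisms of `F`: these polynomials are additive since Frobenius is, two of them
agreeing on `F` coincide because their degrees are below `|F|`, and both sides have `p^(n²)`
elements. So the bijective ones are counted by `|GL_n(𝔽_p)| = ∏_{i<n} (p^n - p^i)`. Scaling by
`Fˣ` permutes them freely with the monic ones as a section, which divides the count by
`p^n - 1`, the `i = 0` factor.
-/

open Polynomial Module

theorem card_bijective_linearMap (K V : Type*) [Field K] [Fintype K] [AddCommGroup V]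
    [Module K V] [Finite V] :
    Nat.card {g : V →ₗ[K] V // Function.Bijective g} =
      ∏ i : Fin (finrank K V), (Fintype.card K ^ finrank K V - Fintype.card K ^ (i : ℕ)) := by
  let toLinearEquiv : {g : V →ₗ[K] V // Function.Bijective g} ≃ (V ≃ₗ[K] V) :=
    { toFun g := LinearEquiv.ofBijective g.1 g.2
      invFun e := ⟨e, e.bijective⟩
      left_inv _ := rfl
      right_inv _ := LinearEquiv.ext fun _ => rfl }
  rw [← Matrix.card_GL_field, Nat.card_congr toLinearEquiv]
  exact Nat.card_congr ((LinearMap.GeneralLinearGroup.generalLinearEquiv K V).symm.trans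
    (Units.mapEquiv (LinearMap.toMatrixAlgEquiv (finBasis K V)).toMulEquiv)).toEquiv

theorem finrank_zmod_eq_of_card_eq {p n : ℕ} [Fact p.Prime] {V : Type*} [AddCommGroup V]
    [Module (ZMod p) V] [Fintype V] (h : Fintype.card V = p ^ n) : finrank (ZMod p) V = n :=
  Nat.pow_right_injective (Fact.out : p.Prime).two_le <|
    show p ^ _ = p ^ n by rw [FiniteField.pow_finrank_eq_card, h]

theorem card_eq_mul_card_monic {K : Type*} [Field K] [Finite K] (S : Set K[X]) (h0 : 0 ∉ S)
    (hsmul : ∀ a : K, a ≠ 0 → ∀ f ∈ S, a • f ∈ S) :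
    Nat.card S = (Nat.card K - 1) * Nat.card {f : K[X] // f.Monic ∧ f ∈ S} := by
  have hlc (f : S) : f.1.leadingCoeff ≠ 0 := leadingCoeff_ne_zero.2 (ne_of_mem_of_not_mem f.2 h0)
  let e : Kˣ × {f : K[X] // f.Monic ∧ f ∈ S} ≃ S :=
    { toFun uf := ⟨(uf.1 : K) • uf.2.1, hsmul _ uf.1.ne_zero _ uf.2.2.2⟩
      invFun f := (Units.mk0 _ (hlc f),
        ⟨f.1.leadingCoeff⁻¹ • f.1, by simp [smul_eq_C_mul, hlc f, Monic],
          hsmul _ (inv_ne_zero (hlc f)) _ f.2⟩)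
      left_inv := by
        rintro ⟨u, f, hf, -⟩
        have : ((u : K) • f).leadingCoeff = u := by simp [smul_eq_C_mul, hf.leadingCoeff]
        ext <;> simp [this, smul_smul]
      right_inv f := by ext1; simp [smul_smul, mul_inv_cancel₀ (hlc f)] }
  rw [← Nat.card_congr e, Nat.card_prod, Nat.card_units]

theorem linearIndependent_X_pow_pow (R : Type*) [CommRing R] [Nontrivial R] {p : ℕ} (hp : 1 < p)
    (n : ℕ) : LinearIndependent R (fun j : Fin n => (X : R[X]) ^ p ^ (j : ℕ)) := by
  have hinj : Function.Injective fun j : Fin n => p ^ (j : ℕ) :=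
    (Nat.pow_right_injective hp).comp Fin.val_injective
  simpa [coe_basisMonomials, Function.comp_def, X_pow_eq_monomial] using
    (basisMonomials R).linearIndependent.comp _ hinj

noncomputable def linearizedSpan (R : Type*) [CommRing R] (p n : ℕ) : Submodule R R[X] :=
  Submodule.span R (Set.range fun j : Fin n => X ^ p ^ (j : ℕ))

section LinearizedSpan

variable {R : Type*} [CommRing R] {p n : ℕ}

theorem natCard_linearizedSpan [Nontrivial R] (hp : 1 < p) :
    Nat.card (linearizedSpan R p n) = Nat.card R ^ n := by
  rw [linearizedSpan,
    Nat.card_congr (Basis.span (linearIndependent_X_pow_pow R hp n)).equivFun.toEquiv,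
    Nat.card_fun, Nat.card_fin]

theorem natDegree_lt_of_mem_linearizedSpan (hp : 1 < p) {f : R[X]}
    (hf : f ∈ linearizedSpan R p n) : f.natDegree < p ^ n := by
  induction hf using Submodule.span_induction with
  | mem g hg =>
    obtain ⟨j, rfl⟩ := hg
    exact (natDegree_X_pow_le _).trans_lt (Nat.pow_lt_pow_right hp j.isLt)
  | zero => simpa using Nat.pow_pos (n := n) (by omega : 0 < p)
  | add f g _ _ hf hg => exact (natDegree_add_le f g).trans_lt (max_lt hf hg)
  | smul a f _ hf => exact (natDegree_smul_le a f).trans_lt hf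

theorem eval_add_of_mem_linearizedSpan [ExpChar R p] {f : R[X]} (hf : f ∈ linearizedSpan R p n)
    (x y : R) : f.eval (x + y) = f.eval x + f.eval y := by
  induction hf using Submodule.span_induction with
  | mem g hg =>
    obtain ⟨j, rfl⟩ := hg
    simp [add_pow_expChar_pow]
  | zero => simp
  | add f g _ _ hf hg => simp only [eval_add, hf, hg]; ring
  | smul a f _ hf => simp only [eval_smul, hf, smul_add]

end LinearizedSpan

section LinearizedEval

variable {F : Type*} [Field F] {p n : ℕ} [Fact p.Prime] [CharP F p] [Module (ZMod p) F]

noncomputable def linearizedEval (f : linearizedSpan F p n) : F →ₗ[ZMod p] F :=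
  (AddMonoidHom.mk' (fun x => f.1.eval x) (eval_add_of_mem_linearizedSpan f.2)).toZModLinearMap p

theorem linearizedEval_injective [Fintype F] (hcard : Fintype.card F = p ^ n) :
    Function.Injective (linearizedEval (F := F) (p := p) (n := n)) := by
  intro f g hfg
  have hp := (Fact.out : p.Prime).one_lt
  refine Subtype.ext (eq_of_natDegree_lt_card_of_eval_eq _ _ Function.injective_id
    (fun x => congr($hfg x)) ?_)
  rw [hcard]
  exact max_lt (natDegree_lt_of_mem_linearizedSpan hp f.2)
    (natDegree_lt_of_mem_linearizedSpan hp g.2)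

theorem linearizedEval_bijective [Fintype F] (hcard : Fintype.card F = p ^ n) :
    Function.Bijective (linearizedEval (F := F) (p := p) (n := n)) := by
  have : Finite (F →ₗ[ZMod p] F) := Module.finite_of_finite (ZMod p)
  refine (Nat.bijective_iff_injective_and_card _).2 ⟨linearizedEval_injective hcard, ?_⟩
  rw [natCard_linearizedSpan (Fact.out : p.Prime).one_lt,
    natCard_eq_pow_finrank (K := ZMod p) (V := F →ₗ[ZMod p] F), finrank_linearMap,
    finrank_zmod_eq_of_card_eq hcard, Nat.card_zmod, Nat.card_eq_fintype_card, hcard, pow_mul]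

end LinearizedEval

theorem card_bijective_mem_linearizedSpan {F : Type*} [Field F] [Fintype F] {p n : ℕ}
    [Fact p.Prime] [CharP F p] (hcard : Fintype.card F = p ^ n) :
    Nat.card {f : F[X] // f ∈ linearizedSpan F p n ∧ Function.Bijective fun x => f.eval x} =
      ∏ i : Fin n, (p ^ n - p ^ (i : ℕ)) := by
  let := ZMod.algebra F p
  calc
    _ = Nat.card {f : linearizedSpan F p n // Function.Bijective (linearizedEval f)} :=
      Nat.card_congr (Equiv.subtypeSubtypeEquivSubtypeInter _ _).symm
    _ = Nat.card {g : F →ₗ[ZMod p] F // Function.Bijective g} :=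
      Nat.card_congr ((Equiv.ofBijective _ (linearizedEval_bijective hcard)).subtypeEquiv
        fun _ => Iff.rfl)
    _ = _ := by
      rw [card_bijective_linearMap, ZMod.card, finrank_zmod_eq_of_card_eq hcard]

/-- over `F = 𝔽_{p^n}`, the number of monic linearized polynomials
(monic polynomials in the span of the monomials `x^(p^j)`, `0 ≤ j ≤ n−1`) whose
evaluation map is a bijection of `F` is `∏_{i=1}^{n−1} (p^n − p^i)`. -/
theorem card_monic_linearized_pp {F : Type*} [Field F] [Fintype F] (p n : ℕ)
    (hp : p.Prime) (hn : 1 ≤ n) (hcard : Fintype.card F = p ^ n) :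
    Nat.card {f : F[X] //
        f.Monic ∧
        f ∈ Submodule.span F {g : F[X] | ∃ j ≤ n - 1, g = X ^ p ^ j} ∧
        Function.Bijective (fun x : F => f.eval x)} =
      ∏ i ∈ Finset.Ico 1 n, (p ^ n - p ^ i) := by
  have : Fact p.Prime := ⟨hp⟩
  have : CharP F p := charP_of_card_eq_prime_pow hcard
  have hspan :
      Submodule.span F {g : F[X] | ∃ j ≤ n - 1, g = X ^ p ^ j} = linearizedSpan F p n := by
    congr 1
    ext g
    exact ⟨fun ⟨j, _, hg⟩ => ⟨⟨j, by omega⟩, hg.symm⟩,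
      fun ⟨j, hg⟩ => ⟨j, by omega, hg.symm⟩⟩
  let S : Set F[X] := {f | f ∈ linearizedSpan F p n ∧ Function.Bijective fun x => f.eval x}
  have h0 : 0 ∉ S := fun h => zero_ne_one (h.2.injective (a₁ := 0) (a₂ := 1) (by simp))
  have hsmul (a : F) (ha : a ≠ 0) (f : F[X]) (hf : f ∈ S) : a • f ∈ S :=
    ⟨Submodule.smul_mem _ a hf.1, by
      simpa [smul_eq_C_mul] using (Equiv.mulLeft₀ a ha).bijective.comp hf.2⟩
  have hprod : ∏ i : Fin n, (p ^ n - p ^ (i : ℕ)) =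
      (p ^ n - 1) * ∏ i ∈ Finset.Ico 1 n, (p ^ n - p ^ i) := by
    rw [Fin.prod_univ_eq_prod_range (fun i => p ^ n - p ^ i), Finset.prod_range_eq_mul_Ico _ hn,
      pow_zero]
  have hunits : 0 < p ^ n - 1 := Nat.sub_pos_of_lt (Nat.one_lt_pow (by omega) hp.one_lt)
  rw [hspan]
  refine Nat.eq_of_mul_eq_mul_left hunits ?_
  rw [← hprod, ← card_bijective_mem_linearizedSpan hcard, ← hcard,
    ← Nat.card_eq_fintype_card]
  exact (card_eq_mul_card_monic S h0 hsmul).symm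
end

section
/- Let p be a prime, F a finite field with p² elements, m an integer with 2 ≤ m ≤ p − 1, b ∈ F with b^{p+1} = 1, and α, β ∈ F with α^{p+1} ≠ β^{p+1} and (β + bα)^{p−1} = (−1)^m b^{mp−1}. Define d = (−1)^m b^{mp}, γ = −α/(β^{p+1} − α^{p+1}), ε = β^p/(β^{p+1} − α^{p+1}), and δ = (−γd − ε)/(β^p − αd)^m. Then the map f : F → F given by f(x) = (x^p − b·x)^m + α·x^p + β·x is a bijection of F, and the map h : F → F given by h(x) = δ·(x^p − d·x)^m + γ·x^p + ε·x is its two-sided compositional inverse: h(f(x)) = x and f(h(x)) = x for all x ∈ F. -/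
/-!
Write `x̄ = x ^ p`; since `p` is a power of the characteristic and `x ^ (p ^ 2) = x`, the bar map
is an involutive automorphism of `F`. For `T_c(x) = x̄ - c x` and `b̄ b = 1` one has
`(T_b x)‾ = -b̄ · T_b x`, so `(T_b x) ^ m` is fixed by the bar map up to the factor
`d = (-b̄) ^ m`. The hypothesis on `β + bα` says `b · (β + bα)‾ = d · (β + bα)`, which makes
`T_d ∘ f = (β̄ - αd) · T_b`; together with `γ ȳ + ε y` inverting the linear part `α x̄ + β x`, this
gives `h ∘ f = id` by direct computation. On the finite set `F` a left inverse is two-sided.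
-/

open Function

section Involution

variable {F : Type*} [Field F] {σ : F →+* F}

def conjSub (σ : F →+* F) (c x : F) : F := σ x - c * x

/-- `f = conjPoly σ m 1 b α β` and `h = conjPoly σ m δ d γ ε`, with `σ x = x ^ p`. -/
def conjPoly (σ : F →+* F) (m : ℕ) (a c α β x : F) : F :=
  a * conjSub σ c x ^ m + α * σ x + β * x

theorem map_conjSub (hσ : Involutive σ) {c : F} (hc : σ c * c = 1) (x : F) :
    σ (conjSub σ c x) = -σ c * conjSub σ c x := by
  rw [conjSub, map_sub, map_mul, hσ]
  linear_combination (-x) * hc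

variable {m : ℕ} {b d α β : F}

theorem map_conjPoly (hσ : Involutive σ) (hb : σ b * b = 1) (hd : d = (-σ b) ^ m) (x : F) :
    σ (conjPoly σ m 1 b α β x) = conjPoly σ m d b (σ β) (σ α) x := by
  simp only [conjPoly, map_add, map_mul, map_pow, map_one, map_conjSub hσ hb, hσ x, mul_pow, hd]
  ring

theorem conjSub_conjPoly (hσ : Involutive σ) (hb : σ b * b = 1) (hd : d = (-σ b) ^ m)
    (hbαβ : b * σ (β + b * α) = d * (β + b * α)) (x : F) :
    conjSub σ d (conjPoly σ m 1 b α β x) = (σ β - α * d) * conjSub σ b x := by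
  rw [conjSub, map_conjPoly hσ hb hd]
  rw [map_add, map_mul] at hbαβ
  simp only [conjPoly, conjSub]
  linear_combination x * hbαβ - x * σ α * hb

theorem conj_sub_mul_ne_zero (hb : σ b * b = 1) (hbαβ : b * σ (β + b * α) = d * (β + b * α))
    (hΔ : σ β * β - σ α * α ≠ 0) : σ β - α * d ≠ 0 := by
  intro h
  rw [map_add, map_mul] at hbαβ
  have hα : σ α = d * β := by linear_combination hbαβ - σ α * hb - b * h
  exact hΔ (by rw [sub_eq_zero.mp h, hα]; ring)

theorem leftInverse_conjPoly (hσ : Involutive σ) (hb : σ b * b = 1) (hd : d = (-σ b) ^ m)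
    (hbαβ : b * σ (β + b * α) = d * (β + b * α)) (hΔ : σ β * β - σ α * α ≠ 0) {γ ε δ : F}
    (hγ : γ = -α / (σ β * β - σ α * α)) (hε : ε = σ β / (σ β * β - σ α * α))
    (hδ : δ = (-γ * d - ε) / (σ β - α * d) ^ m) :
    LeftInverse (conjPoly σ m δ d γ ε) (conjPoly σ m 1 b α β) := by
  have hδc : δ * (σ β - α * d) ^ m = -γ * d - ε :=
    hδ ▸ div_mul_cancel₀ _ (pow_ne_zero m (conj_sub_mul_ne_zero hb hbαβ hΔ))
  have hγε₀ : γ * σ β + ε * α = 0 := by rw [hγ, hε]; field_simp; ring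
  have hγε₁ : γ * σ α + ε * β = 1 := by
    rw [hγ, hε, div_mul_eq_mul_div, div_mul_eq_mul_div, ← add_div, div_eq_one_iff_eq hΔ]
    ring
  intro x
  rw [conjPoly, conjSub_conjPoly hσ hb hd hbαβ, map_conjPoly hσ hb hd, mul_pow]
  simp only [conjPoly]
  linear_combination conjSub σ b x ^ m * hδc + σ x * hγε₀ + x * hγε₁

end Involution

theorem FiniteField.exists_involutive_ringHom_eq_pow_of_card_eq_sq {F : Type*} [Field F]
    [Fintype F] {p : ℕ} (hcard : Fintype.card F = p ^ 2) : ∃ σ : F →+* F, Involutive σ ∧ ∀ x, σ x = x ^ p := by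
  obtain ⟨n, hq, hn⟩ := FiniteField.card F (ringChar F)
  obtain ⟨k, -, rfl⟩ : ∃ k ≤ (n : ℕ), p = ringChar F ^ k :=
    (Nat.dvd_prime_pow hq).mp (hn ▸ hcard ▸ Dvd.intro_left _ (sq p).symm)
  have : Fact (ringChar F).Prime := ⟨hq⟩
  refine ⟨iterateFrobenius F (ringChar F) k, fun x => ?_, iterateFrobenius_def _ _⟩
  simp only [iterateFrobenius_def, ← pow_mul, ← sq, ← hcard, FiniteField.pow_card]

theorem pp_and_compositional_inverse_general {F : Type*} [Field F] [Fintype F]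
    (p : ℕ) (hcard : Fintype.card F = p ^ 2)
    (m : ℕ) (hm1 : 2 ≤ m)
    (b : F) (hb : b ^ (p + 1) = 1)
    (α β : F) (hαβ : α ^ (p + 1) ≠ β ^ (p + 1))
    (hcond : (β + b * α) ^ (p - 1) = (-1 : F) ^ m * b ^ (m * p - 1))
    (d γ ε δ : F)
    (hd : d = (-1 : F) ^ m * b ^ (m * p))
    (hγ : γ = -α / (β ^ (p + 1) - α ^ (p + 1)))
    (hε : ε = β ^ p / (β ^ (p + 1) - α ^ (p + 1)))
    (hδ : δ = (-γ * d - ε) / (β ^ p - α * d) ^ m) :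
    Function.Bijective (fun x : F => (x ^ p - b * x) ^ m + α * x ^ p + β * x) ∧
    (∀ x : F,
      δ * (((x ^ p - b * x) ^ m + α * x ^ p + β * x) ^ p
            - d * ((x ^ p - b * x) ^ m + α * x ^ p + β * x)) ^ m
        + γ * ((x ^ p - b * x) ^ m + α * x ^ p + β * x) ^ p
        + ε * ((x ^ p - b * x) ^ m + α * x ^ p + β * x) = x) ∧
    (∀ x : F,
      ((δ * (x ^ p - d * x) ^ m + γ * x ^ p + ε * x) ^ p
          - b * (δ * (x ^ p - d * x) ^ m + γ * x ^ p + ε * x)) ^ m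
        + α * (δ * (x ^ p - d * x) ^ m + γ * x ^ p + ε * x) ^ p
        + β * (δ * (x ^ p - d * x) ^ m + γ * x ^ p + ε * x) = x) := by
  obtain ⟨σ, hσ, hσp⟩ := FiniteField.exists_involutive_ringHom_eq_pow_of_card_eq_sq hcard
  have hp : 1 ≤ p := Nat.pos_of_ne_zero fun h => by simp [h] at hcard
  have hσb : σ b * b = 1 := by rw [hσp, ← pow_succ, hb]
  have hσd : d = (-σ b) ^ m := by rw [hd, hσp, neg_pow (b ^ p), ← pow_mul, mul_comm p]
  have hbαβ : b * σ (β + b * α) = d * (β + b * α) :=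
    calc b * σ (β + b * α) = b * ((β + b * α) ^ (p - 1) * (β + b * α)) := by
          rw [hσp, ← pow_succ, Nat.sub_add_cancel hp]
      _ = (-1) ^ m * (b ^ (m * p - 1) * b) * (β + b * α) := by rw [hcond]; ring
      _ = d * (β + b * α) := by rw [← pow_succ, Nat.sub_add_cancel (by nlinarith), hd]
  have hΔ : σ β * β - σ α * α = β ^ (p + 1) - α ^ (p + 1) := by simp only [hσp, pow_succ]
  rw [← hΔ] at hγ hε
  rw [← hσp] at hε hδ
  have hinv := leftInverse_conjPoly hσ hσb hσd hbαβ (hΔ ▸ sub_ne_zero.mpr hαβ.symm) hγ hε hδ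
  have hbij := Finite.injective_iff_bijective.mp hinv.injective
  have hright := hinv.rightInverse_of_surjective hbij.surjective
  unfold RightInverse LeftInverse at hinv hright
  unfold conjPoly conjSub at hinv hbij hright
  simp only [hσp, one_mul] at hinv hbij hright
  exact ⟨hbij, hinv, hright⟩

/-- over `F = 𝔽_{p²}`, for `2 ≤ m ≤ p − 1`, `b` a `(p+1)`-th root of
unity, and `α, β` with `α^(p+1) ≠ β^(p+1)` and `(β + bα)^(p−1) = (−1)^m b^(mp−1)`,
the map `f(x) = (x^p − bx)^m + αx^p + βx` is a bijection of `F`, with two-sided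
compositional inverse `h(x) = δ(x^p − dx)^m + γx^p + εx`, where
`d = (−1)^m b^(mp)`, `γ = −α/(β^(p+1) − α^(p+1))`, `ε = β^p/(β^(p+1) − α^(p+1))`
and `δ = (−γd − ε)/(β^p − αd)^m`. -/
theorem pp_and_compositional_inverse {F : Type*} [Field F] [Fintype F]
    (p : ℕ) (hp : p.Prime) (hcard : Fintype.card F = p ^ 2)
    (m : ℕ) (hm1 : 2 ≤ m) (hm2 : m ≤ p - 1)
    (b : F) (hb : b ^ (p + 1) = 1)
    (α β : F) (hαβ : α ^ (p + 1) ≠ β ^ (p + 1))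
    (hcond : (β + b * α) ^ (p - 1) = (-1 : F) ^ m * b ^ (m * p - 1))
    (d γ ε δ : F)
    (hd : d = (-1 : F) ^ m * b ^ (m * p))
    (hγ : γ = -α / (β ^ (p + 1) - α ^ (p + 1)))
    (hε : ε = β ^ p / (β ^ (p + 1) - α ^ (p + 1)))
    (hδ : δ = (-γ * d - ε) / (β ^ p - α * d) ^ m) :
    Function.Bijective (fun x : F => (x ^ p - b * x) ^ m + α * x ^ p + β * x) ∧
    (∀ x : F,
      δ * (((x ^ p - b * x) ^ m + α * x ^ p + β * x) ^ p
            - d * ((x ^ p - b * x) ^ m + α * x ^ p + β * x)) ^ m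
        + γ * ((x ^ p - b * x) ^ m + α * x ^ p + β * x) ^ p
        + ε * ((x ^ p - b * x) ^ m + α * x ^ p + β * x) = x) ∧
    (∀ x : F,
      ((δ * (x ^ p - d * x) ^ m + γ * x ^ p + ε * x) ^ p
          - b * (δ * (x ^ p - d * x) ^ m + γ * x ^ p + ε * x)) ^ m
        + α * (δ * (x ^ p - d * x) ^ m + γ * x ^ p + ε * x) ^ p
        + β * (δ * (x ^ p - d * x) ^ m + γ * x ^ p + ε * x) = x) :=
  pp_and_compositional_inverse_general p hcard m hm1 b hb α β hαβ hcond d γ ε δ hd hγ hε hδ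
end

section
/- Let p be a prime, F a finite field with p² elements, m an integer with 2 ≤ m ≤ p − 1, b ∈ F with b^{p+1} = 1, and α, β ∈ F with α^{p+1} ≠ β^{p+1} and (β + bα)^{p−1} = (−1)^m b^{mp−1}. Define d = (−1)^m b^{mp}, γ = −α/(β^{p+1} − α^{p+1}), ε = β^p/(β^{p+1} − α^{p+1}), and δ = (−γd − ε)/(β^p − αd)^m. Then b^{m²} · δ^p = b · δ. -/
/-!
Put `N = β^(p+1) - α^(p+1)` and `Z = β^p - α d`. Unfolding `γ` and `ε` gives `δ N Z^m = -Z`.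
The Frobenius `x ↦ x^p` of `F` is an involution fixing `N`, so `δ^p N (Z^p)^m = -Z^p`, while the
condition on `(β + bα)^(p-1)` says exactly that `b β^p + α^p = d (β + bα)`, i.e. `d Z^p = b Z`.
Thus `δ^p = (d/b)^(m-1) δ`, and `b^(m²) d^m = b^m d` holds because `b^(p+1) = 1`.
-/

section Monoid

variable {M : Type*} [CommMonoid M] {p : ℕ}

theorem pow_pow_eq_self_of_pow_sq (hM : ∀ x : M, x ^ p ^ 2 = x) (x : M) : (x ^ p) ^ p = x := by
  rw [← pow_mul, ← sq, hM]

theorem pow_succ_pow_eq_self_of_pow_sq (hM : ∀ x : M, x ^ p ^ 2 = x) (x : M) :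
    (x ^ (p + 1)) ^ p = x ^ (p + 1) := by
  rw [pow_succ, mul_pow, pow_pow_eq_self_of_pow_sq hM, mul_comm]

end Monoid

section CommRing

variable {R : Type*} [CommRing R] {p m : ℕ} {α β b d : R}

theorem neg_one_pow_sq (n : ℕ) : (-1 : R) ^ n ^ 2 = (-1) ^ n := by
  rw [sq, pow_mul]
  rcases neg_one_pow_eq_or R n with h | h <;> rw [h]
  · exact one_pow n
  · exact h

theorem pow_sq_mul_pow_eq_of_pow_succ_eq_one (hb : b ^ (p + 1) = 1)
    (hd : d = (-1) ^ m * b ^ (m * p)) : b ^ m ^ 2 * d ^ m = b ^ m * d :=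
  calc b ^ m ^ 2 * d ^ m = (-1) ^ m ^ 2 * (b ^ (p + 1)) ^ m ^ 2 := by rw [hd]; ring
    _ = (-1) ^ m * (b ^ (p + 1)) ^ m := by rw [hb, one_pow, one_pow, neg_one_pow_sq]
    _ = b ^ m * d := by rw [hd]; ring

theorem sub_mul_ne_zero_of_pow_succ_ne (hrel : b * β ^ p + α ^ p = d * (β + b * α))
    (hαβ : α ^ (p + 1) ≠ β ^ (p + 1)) : β ^ p - α * d ≠ 0 := by
  intro h
  have hβ : β ^ p = α * d := by linear_combination h
  have hα : α ^ p = β * d := by linear_combination hrel - b * h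
  exact hαβ (by rw [pow_succ, pow_succ, hα, hβ]; ring)

variable [ExpChar R p]

theorem mul_pow_add_pow_eq_of_pow_pred_eq (hm : 1 ≤ m) (hb : b ^ (p + 1) = 1)
    (hd : d = (-1) ^ m * b ^ (m * p))
    (hcond : (β + b * α) ^ (p - 1) = (-1) ^ m * b ^ (m * p - 1)) :
    b * β ^ p + α ^ p = d * (β + b * α) := by
  have hp : 1 ≤ p := expChar_pos R p
  have hb' : b ^ (m * p) = b ^ (m * p - 1) * b := by
    rw [← pow_succ, Nat.sub_add_cancel (Nat.one_le_iff_ne_zero.2 (by positivity))]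
  calc b * β ^ p + α ^ p = b * β ^ p + b ^ (p + 1) * α ^ p := by rw [hb, one_mul]
    _ = b * (β + b * α) ^ (p - 1 + 1) := by
      rw [Nat.sub_add_cancel hp, add_pow_expChar, mul_pow]; ring
    _ = d * (β + b * α) := by rw [pow_succ, hcond, hd, hb']; ring

variable (hR : ∀ x : R, x ^ p ^ 2 = x)
include hR

theorem mul_pow_expChar_eq_one (hb : b ^ (p + 1) = 1) (hd : d = (-1) ^ m * b ^ (m * p)) :
    d * d ^ p = 1 := by
  have hdp : d ^ p = (-1) ^ m * b ^ m :=
    calc d ^ p = ((-1) ^ p) ^ m * ((b ^ p) ^ p) ^ m := by rw [hd]; ring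
      _ = (-1) ^ m * b ^ m := by rw [neg_one_pow_expChar, pow_pow_eq_self_of_pow_sq hR]
  calc d * d ^ p = ((-1) ^ m) ^ 2 * (b ^ (p + 1)) ^ m := by rw [hdp, hd]; ring
    _ = 1 := by rw [hb, ← pow_mul, pow_mul']; norm_num

theorem mul_sub_mul_pow_expChar_eq (hb : b ^ (p + 1) = 1) (hd : d = (-1) ^ m * b ^ (m * p))
    (hrel : b * β ^ p + α ^ p = d * (β + b * α)) :
    d * (β ^ p - α * d) ^ p = b * (β ^ p - α * d) := by
  rw [sub_pow_expChar, mul_pow, pow_pow_eq_self_of_pow_sq hR]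
  linear_combination (-α ^ p) * mul_pow_expChar_eq_one hR hb hd - hrel

end CommRing

theorem delta_property_general {F : Type*} [Field F] [Fintype F]
    (p : ℕ) (hp : p.Prime) (hcard : Fintype.card F = p ^ 2)
    (m : ℕ) (hm1 : 2 ≤ m)
    (b : F) (hb : b ^ (p + 1) = 1)
    (α β : F) (hαβ : α ^ (p + 1) ≠ β ^ (p + 1))
    (hcond : (β + b * α) ^ (p - 1) = (-1 : F) ^ m * b ^ (m * p - 1))
    (d γ ε δ : F)
    (hd : d = (-1 : F) ^ m * b ^ (m * p))
    (hγ : γ = -α / (β ^ (p + 1) - α ^ (p + 1)))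
    (hε : ε = β ^ p / (β ^ (p + 1) - α ^ (p + 1)))
    (hδ : δ = (-γ * d - ε) / (β ^ p - α * d) ^ m) :
    b ^ (m ^ 2) * δ ^ p = b * δ := by
  have := Fact.mk hp
  have := charP_of_card_eq_prime_pow hcard
  have hF : ∀ x : F, x ^ p ^ 2 = x := hcard ▸ FiniteField.pow_card
  have hrel := mul_pow_add_pow_eq_of_pow_pred_eq (by omega) hb hd hcond
  set N := β ^ (p + 1) - α ^ (p + 1)
  set Z := β ^ p - α * d
  have hN : N ≠ 0 := sub_ne_zero.2 hαβ.symm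
  have hZ : Z ≠ 0 := sub_mul_ne_zero_of_pow_succ_ne hrel hαβ
  have hb0 : b ≠ 0 := by rintro rfl; simp at hb
  have hδZ : δ * (N * Z ^ m) = -Z := by
    rw [hδ, hγ, hε]; field_simp; ring
  have hNp : N ^ p = N := by
    rw [sub_pow_expChar, pow_succ_pow_eq_self_of_pow_sq hF, pow_succ_pow_eq_self_of_pow_sq hF]
  have hδZp : δ ^ p * (N * (Z ^ p) ^ m) = -Z ^ p := by
    have h := congrArg (· ^ p) hδZ
    rwa [mul_pow, mul_pow, hNp, ← pow_mul, mul_comm m p, pow_mul, neg_pow, neg_one_pow_expChar,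
      neg_one_mul] at h
  have hZp := mul_sub_mul_pow_expChar_eq hF hb hd hrel
  have hZpm : d ^ m * (Z ^ p) ^ m = b ^ m * Z ^ m := by rw [← mul_pow, ← mul_pow, hZp]
  apply mul_right_cancel₀ (mul_ne_zero (mul_ne_zero hN (pow_ne_zero m hb0)) (pow_ne_zero m hZ))
  linear_combination -(b ^ m ^ 2 * δ ^ p * N) * hZpm + b ^ m ^ 2 * d ^ m * hδZp
    - Z ^ p * pow_sq_mul_pow_eq_of_pow_succ_eq_one hb hd - b ^ m * hZp - b * b ^ m * hδZ

/-- over `F = 𝔽_{p²}`, with `2 ≤ m ≤ p − 1`, `b^(p+1) = 1`,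
`α^(p+1) ≠ β^(p+1)`, `(β + bα)^(p−1) = (−1)^m b^(mp−1)`, and with
`d = (−1)^m b^(mp)`, `γ = −α/(β^(p+1) − α^(p+1))`, `ε = β^p/(β^(p+1) − α^(p+1))`,
`δ = (−γd − ε)/(β^p − αd)^m`, one has `b^(m²) δ^p = b δ`. -/
theorem delta_property {F : Type*} [Field F] [Fintype F]
    (p : ℕ) (hp : p.Prime) (hcard : Fintype.card F = p ^ 2)
    (m : ℕ) (hm1 : 2 ≤ m) (hm2 : m ≤ p - 1)
    (b : F) (hb : b ^ (p + 1) = 1)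
    (α β : F) (hαβ : α ^ (p + 1) ≠ β ^ (p + 1))
    (hcond : (β + b * α) ^ (p - 1) = (-1 : F) ^ m * b ^ (m * p - 1))
    (d γ ε δ : F)
    (hd : d = (-1 : F) ^ m * b ^ (m * p))
    (hγ : γ = -α / (β ^ (p + 1) - α ^ (p + 1)))
    (hε : ε = β ^ p / (β ^ (p + 1) - α ^ (p + 1)))
    (hδ : δ = (-γ * d - ε) / (β ^ p - α * d) ^ m) :
    b ^ (m ^ 2) * δ ^ p = b * δ :=
  delta_property_general p hp hcard m hm1 b hb α β hαβ hcond d γ ε δ hd hγ hε hδ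
end

section
/- Let p be a prime, F a finite field with p² elements, b ∈ F with b^{p+1} = 1, m a natural number, and d = (−1)^m · b^{mp}. Then for every x ∈ F, ((x^p − d·x)^m)^p = b^{m²} · (x^p − d·x)^m. -/
/-!
With `y = x^p - d x`, Frobenius gives `y^p = x^{p²} - d^p x^p = x - d^p x^p = -d^p y`, because
`d^{p+1} = 1`. Hence `(y^m)^p = (-d^p)^m y^m`, and `b^{p²} = b` turns `-d^p` into `(-1)^{m+1} b^m`,
whose `m`-th power is `b^{m²}`.
-/

theorem pow_mul_self_eq_of_pow_succ_eq_one {M : Type*} [Monoid M] {b : M} {p : ℕ}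
    (hb : b ^ (p + 1) = 1) : b ^ (p * p) = b :=
  calc b ^ (p * p) = b ^ (p * p) * b ^ (p + 1) := by rw [hb, mul_one]
    _ = (b ^ (p + 1)) ^ p * b := by
      rw [← pow_add, ← pow_mul, ← pow_succ]; congr 1; ring
    _ = b := by rw [hb, one_pow, one_mul]

section CharP

variable {R : Type*} [CommRing R] (p : ℕ) [ExpChar R p]

theorem frobenius_sub_mul_self {d x : R} (hx : x ^ (p ^ 2) = x) (hd : d * d ^ p = 1) :
    (x ^ p - d * x) ^ p = -d ^ p * (x ^ p - d * x) := by
  rw [sub_pow_expChar, mul_pow, ← pow_mul, ← sq, hx]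
  linear_combination (-x) * hd

variable {p} {b : R} (hb : b ^ (p + 1) = 1) (m : ℕ)
include hb

theorem neg_one_pow_mul_pow_mul_pow_char :
    ((-1) ^ m * b ^ (m * p)) ^ p = (-1) ^ m * b ^ m := by
  rw [mul_pow, ← pow_mul, ← pow_mul, mul_assoc, pow_mul' (-1), pow_mul' b,
    pow_mul_self_eq_of_pow_succ_eq_one hb, neg_one_pow_expChar]

theorem neg_one_pow_mul_pow_mul_mul_pow_char_eq_one :
    ((-1) ^ m * b ^ (m * p)) * ((-1) ^ m * b ^ (m * p)) ^ p = 1 := by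
  calc _ = ((-1) ^ m) ^ 2 * (b ^ (p + 1)) ^ m := by
        rw [neg_one_pow_mul_pow_mul_pow_char hb]; ring
    _ = 1 := by rw [hb, one_pow, mul_one, ← pow_mul, pow_mul', neg_one_sq, one_pow]

theorem neg_pow_neg_one_pow_mul_pow_mul_pow_char :
    (-((-1) ^ m * b ^ (m * p)) ^ p) ^ m = b ^ (m ^ 2) := by
  rw [neg_one_pow_mul_pow_mul_pow_char hb, neg_eq_neg_one_mul, ← mul_assoc, ← pow_succ',
    mul_pow, ← pow_mul, ← pow_mul, mul_comm (m + 1), (Nat.even_mul_succ_self m).neg_one_pow,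
    one_mul, sq]

end CharP

/-- over `F = 𝔽_{p²}`, with `b^(p+1) = 1` and `d = (−1)^m b^(mp)`,
for every `x ∈ F`, `((x^p − dx)^m)^p = b^(m²) (x^p − dx)^m`. -/
theorem hmd_pow_p {F : Type*} [Field F] [Fintype F] (p : ℕ) (hp : p.Prime)
    (hcard : Fintype.card F = p ^ 2) (b : F) (hb : b ^ (p + 1) = 1)
    (m : ℕ) (d : F) (hd : d = (-1 : F) ^ m * b ^ (m * p)) :
    ∀ x : F, ((x ^ p - d * x) ^ m) ^ p = b ^ (m ^ 2) * (x ^ p - d * x) ^ m := by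
  intro x
  have : Fact p.Prime := ⟨hp⟩
  have : CharP F p := charP_of_card_eq_prime_pow hcard
  have hx : x ^ (p ^ 2) = x := hcard ▸ FiniteField.pow_card x
  have hd_norm : d * d ^ p = 1 := hd ▸ neg_one_pow_mul_pow_mul_mul_pow_char_eq_one hb m
  rw [← pow_mul, mul_comm m p, pow_mul, frobenius_sub_mul_self p hx hd_norm, mul_pow, hd,
    neg_pow_neg_one_pow_mul_pow_mul_pow_char hb]
end
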